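/- Gradient formula for the parameters: with C = (I - U T⁻¹ Uᵀ) h, h̃ = T⁻¹ Uᵀ h, C̃ = (Tᵀ)⁻¹ Uᵀ (∂L/∂C), and B = striu(J) + (1/2)I where J is the m×m all-ones matrix, the gradient of L with respect to U (holding h fixed) equals U[(h̃ C̃ᵀ) ∘ Bᵀ + (C̃ h̃ᵀ) ∘ B] - (∂L/∂C) h̃ᵀ - h C̃ᵀ, where ∘ denotes the Hadamard (entrywise) product. -/

import Mathlib

/-!
Differentiate `t ↦ (1 - U_t T_t⁻¹ U_tᵀ) h` along `U_t = U + t V` by the product rule, with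
`Ṫ = (UᵀV + VᵀU) ∘ B` (since `wyT A = A ∘ B`) and `(T⁻¹)˙ = -T⁻¹ Ṫ T⁻¹`. Pairing the result with
`g = ∂L/∂C` and moving every factor next to `h` or `g` turns `gᵀ U T⁻¹` into `C̃ᵀ` and `T⁻¹ Uᵀ h`
into `h̃`; the Hadamard term becomes linear in `V` through `xᵀ (A ∘ B) y = tr((x yᵀ ∘ B) Aᵀ)`
and cyclicity of the trace.
-/

open Matrix

/-- `striu A + (1/2) diag A`: strictly upper triangular part plus half the diagonal. -/
noncomputable def wyT {m : ℕ} (A : Matrix (Fin m) (Fin m) ℝ) : Matrix (Fin m) (Fin m) ℝ :=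
  Matrix.of fun i j => if (i : ℕ) < (j : ℕ) then A i j else if i = j then A i i / 2 else 0

/-- `B = striu(J_m) + (1/2) I_m` where `J_m` is the all-ones matrix. -/
noncomputable def wyB (m : ℕ) : Matrix (Fin m) (Fin m) ℝ :=
  Matrix.of fun i j => if (i : ℕ) < (j : ℕ) then 1 else if i = j then (1 : ℝ) / 2 else 0

-- Any norm gives the same derivatives; the operator norm also makes square matrices a normed
-- algebra, which the derivative of the inverse needs.
attribute [local instance] Matrix.linftyOpNormedAddCommGroup Matrix.linftyOpNormedSpace
  Matrix.linftyOpNormedRing Matrix.linftyOpNormedAlgebra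

section MatrixCalculus

variable {l m n : Type*} [Fintype l] [Fintype m] [Fintype n] {x : ℝ}

theorem HasDerivAt.matrix_mul {A : ℝ → Matrix l m ℝ} {B : ℝ → Matrix m n ℝ}
    {A' : Matrix l m ℝ} {B' : Matrix m n ℝ} (hA : HasDerivAt A A' x) (hB : HasDerivAt B B' x) :
    HasDerivAt (fun t => A t * B t) (A x * B' + A' * B x) x :=
  (mulLinearMap (l := l) (m := m) (n := n) (A := ℝ) ℝ).toContinuousBilinearMap
    |>.hasDerivAt_of_bilinear (fun _ => hA) (fun _ => hB)

theorem HasDerivAt.matrix_mulVec {A : ℝ → Matrix m n ℝ} {v : ℝ → n → ℝ}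
    {A' : Matrix m n ℝ} {v' : n → ℝ} (hA : HasDerivAt A A' x) (hv : HasDerivAt v v' x) :
    HasDerivAt (fun t => A t *ᵥ v t) (A x *ᵥ v' + A' *ᵥ v x) x :=
  (LinearMap.mk₂ ℝ (fun (A : Matrix m n ℝ) (v : n → ℝ) => A *ᵥ v) add_mulVec
    (fun c A v => smul_mulVec c A v) mulVec_add
    (fun c A v => mulVec_smul A c v)).toContinuousBilinearMap
    |>.hasDerivAt_of_bilinear (fun _ => hA) (fun _ => hv)

theorem HasDerivAt.matrix_hadamard {A B : ℝ → Matrix m n ℝ} {A' B' : Matrix m n ℝ}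
    (hA : HasDerivAt A A' x) (hB : HasDerivAt B B' x) :
    HasDerivAt (fun t => A t ⊙ B t) (A x ⊙ B' + A' ⊙ B x) x :=
  (LinearMap.mk₂ ℝ (fun (A B : Matrix m n ℝ) => A ⊙ B) (fun A B C => add_hadamard C A B)
    (fun c A B => smul_hadamard (A := A) (B := B) c) (fun A B C => hadamard_add A B C)
    (fun c A B => hadamard_smul (A := A) (B := B) c)).toContinuousBilinearMap
    |>.hasDerivAt_of_bilinear (fun _ => hA) (fun _ => hB)

theorem HasDerivAt.matrix_transpose {A : ℝ → Matrix m n ℝ} {A' : Matrix m n ℝ}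
    (hA : HasDerivAt A A' x) : HasDerivAt (fun t => (A t)ᵀ) A'ᵀ x :=
  (transposeLinearEquiv m n ℝ ℝ).toLinearMap.toContinuousLinearMap.hasFDerivAt.comp_hasDerivAt x hA

theorem HasDerivAt.matrix_inv [DecidableEq m] {A : ℝ → Matrix m m ℝ} {A' : Matrix m m ℝ}
    (hA : HasDerivAt A A' x) (hx : IsUnit (A x)) :
    HasDerivAt (fun t => (A t)⁻¹) (-((A x)⁻¹ * A' * (A x)⁻¹)) x := by
  obtain ⟨u, hu⟩ := hx
  have := (hu ▸ hasFDerivAt_ringInverse (𝕜 := ℝ) u).comp_hasDerivAt x hA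
  simp only [Function.comp_def, ← nonsing_inv_eq_ringInverse] at this
  refine this.congr_deriv ?_
  simp [← hu, coe_units_inv, Matrix.mul_assoc]

end MatrixCalculus

theorem hasDerivAt_add_smul {E : Type*} [NormedAddCommGroup E] [NormedSpace ℝ E] (u v : E) :
    HasDerivAt (fun t : ℝ => u + t • v) v 0 :=
  (((hasDerivAt_id 0).smul_const v).const_add u).congr_deriv (one_smul ℝ v)

theorem HasGradientAt.comp_toLp_hasDerivAt {ι : Type*} [Fintype ι] {L : EuclideanSpace ℝ ι → ℝ}
    {g c : EuclideanSpace ℝ ι} {φ : ℝ → ι → ℝ} {φ' : ι → ℝ} {x : ℝ}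
    (hL : HasGradientAt L g c) (hc : WithLp.toLp 2 (φ x) = c) (hφ : HasDerivAt φ φ' x) :
    HasDerivAt (fun t => L (WithLp.toLp 2 (φ t))) (g.ofLp ⬝ᵥ φ') x := by
  subst hc
  have := hL.hasFDerivAt.comp_hasDerivAt x
    ((PiLp.continuousLinearEquiv 2 ℝ (fun _ : ι => ℝ)).symm.hasFDerivAt.comp_hasDerivAt x hφ)
  refine this.congr_deriv ?_
  simp only [InnerProductSpace.toDual_apply_apply, EuclideanSpace.inner_eq_star_dotProduct,
    star_trivial]
  exact dotProduct_comm _ _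

section Pairing

variable {l m n : Type*} [Fintype l] [Fintype m] [Fintype n] {R : Type*} [CommRing R]

theorem dotProduct_mulVec_eq_trace (x : m → R) (A : Matrix m n R) (y : n → R) :
    x ⬝ᵥ A *ᵥ y = trace (vecMulVec x y * Aᵀ) := by
  simp only [dotProduct, mulVec, trace, diag_apply, mul_apply, vecMulVec_apply, transpose_apply,
    Finset.mul_sum]
  exact Finset.sum_congr rfl fun i _ => Finset.sum_congr rfl fun j _ => by ring

theorem dotProduct_hadamard_mulVec_eq_trace (x : m → R) (A B : Matrix m n R) (y : n → R) :
    x ⬝ᵥ (A ⊙ B) *ᵥ y = trace ((vecMulVec x y ⊙ B) * Aᵀ) := by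
  rw [dotProduct_mulVec_eq_trace, ← sum_hadamard_eq, ← sum_hadamard_eq]
  simp only [hadamard_apply]
  exact Finset.sum_congr rfl fun i _ => Finset.sum_congr rfl fun j _ => by ring

theorem dotProduct_mul_mulVec (x : l → R) (A : Matrix l m R) (B : Matrix m n R) (y : n → R) :
    x ⬝ᵥ (A * B) *ᵥ y = (Aᵀ *ᵥ x) ⬝ᵥ B *ᵥ y := by
  rw [← mulVec_mulVec, dotProduct_mulVec, mulVec_transpose]

theorem trace_mul_transpose_gram (U V : Matrix n m R) (W : Matrix m m R) :
    trace (W * (Uᵀ * V + Vᵀ * U)ᵀ) = trace (U * (W + Wᵀ) * Vᵀ) := by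
  rw [transpose_add, Matrix.mul_add, trace_add, Matrix.mul_add, Matrix.add_mul, trace_add]
  congr 1
  · rw [transpose_mul, transpose_transpose, ← Matrix.mul_assoc, trace_mul_cycle]
  · rw [← trace_transpose]
    simp only [transpose_mul, transpose_transpose, Matrix.mul_assoc]
    rw [trace_mul_comm, Matrix.mul_assoc]

theorem dotProduct_projection_deriv_mulVec (U V : Matrix n m R) (S B : Matrix m m R)
    (g h : n → R) :
    g ⬝ᵥ -((V * S * Uᵀ - U * (S * ((Uᵀ * V + Vᵀ * U) ⊙ B) * S) * Uᵀ + U * S * Vᵀ) *ᵥ h) =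
      trace ((U * (vecMulVec (S *ᵥ Uᵀ *ᵥ h) (Sᵀ *ᵥ Uᵀ *ᵥ g) ⊙ Bᵀ +
          vecMulVec (Sᵀ *ᵥ Uᵀ *ᵥ g) (S *ᵥ Uᵀ *ᵥ h) ⊙ B) -
        vecMulVec g (S *ᵥ Uᵀ *ᵥ h) - vecMulVec h (Sᵀ *ᵥ Uᵀ *ᵥ g)) * Vᵀ) := by
  set ht := S *ᵥ Uᵀ *ᵥ h
  set Ct := Sᵀ *ᵥ Uᵀ *ᵥ g
  have hCt : (U * S)ᵀ *ᵥ g = Ct := by rw [transpose_mul, ← mulVec_mulVec]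
  have hV_left : g ⬝ᵥ (V * S * Uᵀ) *ᵥ h = trace (vecMulVec g ht * Vᵀ) := by
    rw [Matrix.mul_assoc, ← mulVec_mulVec, ← mulVec_mulVec, dotProduct_mulVec_eq_trace]
  have hV_inner : g ⬝ᵥ (U * (S * ((Uᵀ * V + Vᵀ * U) ⊙ B) * S) * Uᵀ) *ᵥ h =
      trace (U * (vecMulVec ht Ct ⊙ Bᵀ + vecMulVec Ct ht ⊙ B) * Vᵀ) := by
    rw [show U * (S * ((Uᵀ * V + Vᵀ * U) ⊙ B) * S) * Uᵀ =
        U * S * (((Uᵀ * V + Vᵀ * U) ⊙ B) * (S * Uᵀ)) by simp only [Matrix.mul_assoc],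
      dotProduct_mul_mulVec, hCt, ← mulVec_mulVec, ← mulVec_mulVec,
      dotProduct_hadamard_mulVec_eq_trace, trace_mul_transpose_gram, transpose_hadamard,
      transpose_vecMulVec, hadamard_comm, add_comm, hadamard_comm (vecMulVec _ _)]
  have hV_right : g ⬝ᵥ (U * S * Vᵀ) *ᵥ h = trace (vecMulVec h Ct * Vᵀ) := by
    rw [dotProduct_mul_mulVec, hCt, dotProduct_mulVec_eq_trace, ← trace_transpose, transpose_mul,
      transpose_vecMulVec, trace_mul_comm, transpose_transpose]
  simp only [add_mulVec, sub_mulVec, dotProduct_neg, dotProduct_add, dotProduct_sub, hV_left,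
    hV_inner, hV_right, Matrix.sub_mul, trace_sub]
  ring

end Pairing

theorem wyT_eq_hadamard {m : ℕ} (A : Matrix (Fin m) (Fin m) ℝ) : wyT A = A ⊙ wyB m := by
  ext i j
  simp only [wyT, wyB, hadamard_apply, of_apply]
  split_ifs with hlt heq
  · ring
  · subst heq; ring
  · ring

section Projection

variable {n m : ℕ} (U V : Matrix (Fin n) (Fin m) ℝ)

theorem hasDerivAt_wyT_gram :
    HasDerivAt (fun t : ℝ => wyT ((U + t • V)ᵀ * (U + t • V))) ((Uᵀ * V + Vᵀ * U) ⊙ wyB m) 0 := by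
  have hU := hasDerivAt_add_smul U V
  simp only [wyT_eq_hadamard]
  simpa using (hU.matrix_transpose.matrix_mul hU).matrix_hadamard (hasDerivAt_const 0 (wyB m))

theorem hasDerivAt_wyT_projection_mulVec (hT : IsUnit (wyT (Uᵀ * U))) (h : Fin n → ℝ) :
    let S := (wyT (Uᵀ * U))⁻¹
    HasDerivAt (fun t : ℝ =>
        (1 - (U + t • V) * (wyT ((U + t • V)ᵀ * (U + t • V)))⁻¹ * (U + t • V)ᵀ) *ᵥ h)
      (-((V * S * Uᵀ - U * (S * ((Uᵀ * V + Vᵀ * U) ⊙ wyB m) * S) * Uᵀ + U * S * Vᵀ) *ᵥ h)) 0 := by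
  have hU := hasDerivAt_add_smul U V
  have hS := (hasDerivAt_wyT_gram U V).matrix_inv (by simpa using hT)
  have hP := (hU.matrix_mul hS).matrix_mul hU.matrix_transpose
  refine (((hasDerivAt_const 0 1).sub hP).matrix_mulVec (hasDerivAt_const 0 h)).congr_deriv ?_
  simp only [zero_smul, add_zero, mulVec_zero, zero_add, zero_sub, Matrix.add_mul, Matrix.mul_neg,
    Matrix.neg_mul, Matrix.mul_assoc, ← neg_mulVec]
  congr 1
  abel

end Projection

theorem gradient_parameters_general {n m : ℕ}
    (U : Matrix (Fin n) (Fin m) ℝ)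
    (hT : IsUnit (wyT (U.transpose * U)))
    (L : EuclideanSpace ℝ (Fin n) → ℝ) (hL : Differentiable ℝ L)
    (h : EuclideanSpace ℝ (Fin n)) (V : Matrix (Fin n) (Fin m) ℝ) :
    let T := wyT (U.transpose * U)
    let C : EuclideanSpace ℝ (Fin n) :=
      WithLp.toLp 2 (((1 : Matrix (Fin n) (Fin n) ℝ) - U * T⁻¹ * U.transpose).mulVec h)
    let g := gradient L C
    let htilde := T⁻¹.mulVec (U.transpose.mulVec h)
    let Ctilde := (T.transpose)⁻¹.mulVec (U.transpose.mulVec g)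
    let G := U * (Matrix.hadamard (vecMulVec htilde Ctilde) (wyB m).transpose +
        Matrix.hadamard (vecMulVec Ctilde htilde) (wyB m)) -
      vecMulVec g htilde - vecMulVec h Ctilde
    HasDerivAt (fun t : ℝ =>
        L (WithLp.toLp 2 (((1 : Matrix (Fin n) (Fin n) ℝ) -
            (U + t • V) * (wyT ((U + t • V).transpose * (U + t • V)))⁻¹ *
              (U + t • V).transpose).mulVec h)))
      (∑ i, ∑ j, G i j * V i j) 0 := by
  intro T C g htilde Ctilde G
  refine ((hL C).hasGradientAt.comp_toLp_hasDerivAt (by simp [C, T])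
    (hasDerivAt_wyT_projection_mulVec U V hT h)).congr_deriv ?_
  -- `sum_hadamard_eq` holds by `rfl`
  change _ = trace (G * Vᵀ)
  simp only [G, Ctilde, htilde, T, ← transpose_nonsing_inv]
  exact dotProduct_projection_deriv_mulVec U V _ _ _ _

/-- gradient w.r.t. the parameter matrix `U` (holding `h` fixed).  The
gradient of `U ↦ L((I - U T(U)⁻¹ Uᵀ)h)` equals
`U[(h̃ C̃ᵀ) ∘ Bᵀ + (C̃ h̃ᵀ) ∘ B] - (∂L/∂C) h̃ᵀ - h C̃ᵀ`, stated via the directional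
derivative in an arbitrary direction `V`. -/
theorem gradient_parameters {n m : ℕ} (hm : m ≤ n - 1)
    (U : Matrix (Fin n) (Fin m) ℝ)
    (hstruct : ∀ j : Fin m, (fun i => U i j) ≠ 0 ∧
      ∀ i : Fin n, (i : ℕ) < (j : ℕ) → U i j = 0)
    (hT : IsUnit (wyT (U.transpose * U)))
    (L : EuclideanSpace ℝ (Fin n) → ℝ) (hL : Differentiable ℝ L)
    (h : EuclideanSpace ℝ (Fin n)) (V : Matrix (Fin n) (Fin m) ℝ) :
    let T := wyT (U.transpose * U)
    let C : EuclideanSpace ℝ (Fin n) :=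
      WithLp.toLp 2 (((1 : Matrix (Fin n) (Fin n) ℝ) - U * T⁻¹ * U.transpose).mulVec h)
    let g := gradient L C
    let htilde := T⁻¹.mulVec (U.transpose.mulVec h)
    let Ctilde := (T.transpose)⁻¹.mulVec (U.transpose.mulVec g)
    let G := U * (Matrix.hadamard (vecMulVec htilde Ctilde) (wyB m).transpose +
        Matrix.hadamard (vecMulVec Ctilde htilde) (wyB m)) -
      vecMulVec g htilde - vecMulVec h Ctilde
    HasDerivAt (fun t : ℝ =>
        L (WithLp.toLp 2 (((1 : Matrix (Fin n) (Fin n) ℝ) -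
            (U + t • V) * (wyT ((U + t • V).transpose * (U + t • V)))⁻¹ *
              (U + t • V).transpose).mulVec h)))
      (∑ i, ∑ j, G i j * V i j) 0 :=
  gradient_parameters_general U hT L hL h V
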